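/- arXiv:2312.16754 — 7 statements merged into one kernel-verified Lean document; each statement's English description precedes it below -/
import Mathlib

section
/- In a Boolean algebra with an S4 operator ◇ and an S5 operator ∃, the inequality ∃◇a ≤ ◇∃a (for all a) holds iff the identity ∀□∀a = □∀a holds for all a, where □a = ¬◇¬a and ∀a = ¬∃¬a. -/
/-!
The inequality `∃◇a ≤ ◇∃a` for all `a` says exactly that every `◇∃a` is `∃`-closed: given it,
`∃◇∃a ≤ ◇∃∃a ≤ ◇∃a`; conversely `∃◇a ≤ ∃◇∃a = ◇∃a`. Passing to complements, `∃`-closedness of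
`◇∃aᶜ` is the identity `∀□∀a = □∀a`.
-/

/-- The dual "necessity" operator of a possibility operator `f`: `boxOf f a = (f aᶜ)ᶜ`. -/
def boxOf {B : Type*} [BooleanAlgebra B] (f : B → B) (a : B) : B := (f aᶜ)ᶜ

section BooleanAlgebra

variable {B : Type*} [BooleanAlgebra B]

theorem boxOf_eq_self_iff (f : B → B) (a : B) : boxOf f a = a ↔ f aᶜ = aᶜ := by
  rw [boxOf, compl_eq_comm, eq_comm]

theorem boxOf_boxOf_compl (f g : B → B) (a : B) : boxOf f (boxOf g aᶜ) = (f (g a))ᶜ := by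
  simp only [boxOf, compl_compl]

theorem forall_boxOf_boxOf_boxOf_eq_iff (f g : B → B) :
    (∀ a, boxOf g (boxOf f (boxOf g a)) = boxOf f (boxOf g a)) ↔ ∀ a, g (f (g a)) = f (g a) := by
  refine compl_surjective.forall.trans (forall_congr' fun a => ?_)
  rw [boxOf_eq_self_iff, boxOf_boxOf_compl, compl_compl]

end BooleanAlgebra

theorem forall_map_comp_le_iff_forall_map_closed {α : Type*} [PartialOrder α] {f c : α → α}
    (hf : Monotone f) (hc : Monotone c) (hc_le : ∀ a, a ≤ c a) (hc_idem : ∀ a, c (c a) ≤ c a) :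
    (∀ a, c (f a) ≤ f (c a)) ↔ ∀ a, c (f (c a)) = f (c a) := by
  constructor
  · intro H a
    exact le_antisymm ((H (c a)).trans (hf (hc_idem a))) (hc_le _)
  · intro H a
    calc c (f a) ≤ c (f (c a)) := hc (hf (hc_le a))
      _ = f (c a) := H a

theorem stmt1_general {B : Type*} [BooleanAlgebra B] (dia ex : B → B)
    (hdia_or : ∀ a b : B, dia (a ⊔ b) = dia a ⊔ dia b)
    (hex_or : ∀ a b : B, ex (a ⊔ b) = ex a ⊔ ex b)
    (hex_le : ∀ a : B, a ≤ ex a)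
    (hex_idem : ∀ a : B, ex (ex a) ≤ ex a) :
    (∀ a : B, ex (dia a) ≤ dia (ex a)) ↔
      (∀ a : B, boxOf ex (boxOf dia (boxOf ex a)) = boxOf dia (boxOf ex a)) := by
  rw [forall_boxOf_boxOf_boxOf_eq_iff]
  exact forall_map_comp_le_iff_forall_map_closed (Monotone.of_map_sup hdia_or)
    (Monotone.of_map_sup hex_or) hex_le hex_idem

/-- `∃◇a ≤ ◇∃a` holds for all `a` iff `∀□∀a = □∀a` holds for all `a`. -/
theorem stmt1 {B : Type*} [BooleanAlgebra B] (dia ex : B → B)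
    (hdia0 : dia (⊥ : B) = ⊥)
    (hdia_or : ∀ a b : B, dia (a ⊔ b) = dia a ⊔ dia b)
    (hdia_le : ∀ a : B, a ≤ dia a)
    (hdia_idem : ∀ a : B, dia (dia a) ≤ dia a)
    (hex0 : ex (⊥ : B) = ⊥)
    (hex_or : ∀ a b : B, ex (a ⊔ b) = ex a ⊔ ex b)
    (hex_le : ∀ a : B, a ≤ ex a)
    (hex_idem : ∀ a : B, ex (ex a) ≤ ex a)
    (hex5 : ∀ a : B, ex ((ex aᶜ)ᶜ) ≤ (ex aᶜ)ᶜ) :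
    (∀ a : B, ex (dia a) ≤ dia (ex a)) ↔
      (∀ a : B, boxOf ex (boxOf dia (boxOf ex a)) = boxOf dia (boxOf ex a)) :=
  stmt1_general dia ex hdia_or hex_or hex_le hex_idem
end

section
/- In a Boolean algebra with an S4 operator ◇ and an S5 operator ∃, the inequality ∃□a ≤ □∃a (for all a) holds iff the identity ◇∀◇a = ∀◇a holds for all a. -/
/-!
Passing to complements turns `∃□a ≤ □∃a` into `◇∀a ≤ ∀◇a`, i.e. `◇ ∘ ∀ ≤ ∀ ∘ ◇`. For a closure
operator `◇` and a monotone `∀` this is equivalent to `∀◇a` being `◇`-closed: one direction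
applies the inequality at `◇a`, the other bounds `◇∀a ≤ ◇∀◇a`.
-/

section

variable {B : Type*} [BooleanAlgebra B]

theorem Monotone.boxOf {f : B → B} (hf : Monotone f) : Monotone (boxOf f) :=
  fun _ _ h ↦ compl_le_compl (hf (compl_le_compl h))

theorem forall_map_boxOf_le_boxOf_map_iff (f g : B → B) :
    (∀ a, f (boxOf g a) ≤ boxOf g (f a)) ↔ ∀ a, g (boxOf f a) ≤ boxOf f (g a) := by
  refine compl_surjective.forall.trans (forall_congr' fun a ↦ ?_)
  simp only [boxOf, compl_compl]
  exact le_compl_comm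

end

theorem ClosureOperator.closure_comp_le_comp_closure_iff {α : Type*} [PartialOrder α]
    (c : ClosureOperator α) {g : α → α} (hg : Monotone g) :
    (∀ a, c (g a) ≤ g (c a)) ↔ ∀ a, c (g (c a)) = g (c a) := by
  refine ⟨fun h a ↦ ?_, fun h a ↦ ?_⟩
  · exact (c.le_closure _).antisymm' ((h (c a)).trans_eq (by rw [c.idempotent]))
  · exact (c.monotone (hg (c.le_closure a))).trans_eq (h a)

theorem stmt2_general {B : Type*} [BooleanAlgebra B] (dia ex : B → B)
    (hdia_or : ∀ a b : B, dia (a ⊔ b) = dia a ⊔ dia b)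
    (hdia_le : ∀ a : B, a ≤ dia a)
    (hdia_idem : ∀ a : B, dia (dia a) ≤ dia a)
    (hex_or : ∀ a b : B, ex (a ⊔ b) = ex a ⊔ ex b) :
    (∀ a : B, ex (boxOf dia a) ≤ boxOf dia (ex a)) ↔
      (∀ a : B, dia (boxOf ex (dia a)) = boxOf ex (dia a)) := by
  have hex_mono : Monotone ex := OrderHomClass.mono (SupHom.mk ex hex_or)
  let diaClosure : ClosureOperator B :=
    .mk' dia (OrderHomClass.mono (SupHom.mk dia hdia_or)) hdia_le hdia_idem
  rw [forall_map_boxOf_le_boxOf_map_iff]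
  exact diaClosure.closure_comp_le_comp_closure_iff hex_mono.boxOf

/-- `∃□a ≤ □∃a` holds for all `a` iff `◇∀◇a = ∀◇a` holds for all `a`. -/
theorem stmt2 {B : Type*} [BooleanAlgebra B] (dia ex : B → B)
    (hdia0 : dia (⊥ : B) = ⊥)
    (hdia_or : ∀ a b : B, dia (a ⊔ b) = dia a ⊔ dia b)
    (hdia_le : ∀ a : B, a ≤ dia a)
    (hdia_idem : ∀ a : B, dia (dia a) ≤ dia a)
    (hex0 : ex (⊥ : B) = ⊥)
    (hex_or : ∀ a b : B, ex (a ⊔ b) = ex a ⊔ ex b)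
    (hex_le : ∀ a : B, a ≤ ex a)
    (hex_idem : ∀ a : B, ex (ex a) ≤ ex a)
    (hex5 : ∀ a : B, ex ((ex aᶜ)ᶜ) ≤ (ex aᶜ)ᶜ) :
    (∀ a : B, ex (boxOf dia a) ≤ boxOf dia (ex a)) ↔
      (∀ a : B, dia (boxOf ex (dia a)) = boxOf ex (dia a)) :=
  stmt2_general dia ex hdia_or hdia_le hdia_idem hex_or
end

section
/- In any MS4_S-algebra, the operator ♦ = ◇∃ is an S5 possibility operator; moreover the algebra (B, ♦, ∃) satisfies the S5² commutativity ∃♦a = ♦a = ♦∃a for all a. -/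
/-!
Both `◇` and `∃` are closure operators on `B`, and `∃◇ ≤ ◇∃` lets every `∃` be pushed to the
right of a `◇`, so `◇∃◇∃ ≤ ◇◇∃∃ ≤ ◇∃` and `♦` is again an S4 operator. The S5 axiom for `♦` is
exactly the defining axiom `♦■a ≤ ■a` of MS4_S-algebras.
-/

section ClosureComposition

variable {α : Type*} [PartialOrder α] {f g : α → α}

theorem map_map_map_map_le_of_map_comm_le (hf : Monotone f) (hff : ∀ a, f (f a) ≤ f a)
    (hgg : ∀ a, g (g a) ≤ g a) (hgf : ∀ a, g (f a) ≤ f (g a)) (a : α) :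
    f (g (f (g a))) ≤ f (g a) :=
  calc f (g (f (g a))) ≤ f (f (g (g a))) := hf (hgf _)
    _ ≤ f (g (g a)) := hff _
    _ ≤ f (g a) := hf (hgg a)

theorem map_map_map_eq_of_map_comm_le (hf : Monotone f) (hgg : ∀ a, g (g a) ≤ g a)
    (hgf : ∀ a, g (f a) ≤ f (g a)) (hg : ∀ a, a ≤ g a) (a : α) :
    g (f (g a)) = f (g a) :=
  le_antisymm ((hgf _).trans (hf (hgg a))) (hg _)

theorem map_map_map_eq_map_map (hf : Monotone f) (hgg : ∀ a, g (g a) ≤ g a)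
    (hg : ∀ a, a ≤ g a) (a : α) :
    f (g (g a)) = f (g a) :=
  le_antisymm (hf (hgg a)) (hf (hg _))

end ClosureComposition

theorem stmt9_general {B : Type*} [BooleanAlgebra B] (dia ex : B → B)
    (hdia0 : dia (⊥ : B) = ⊥)
    (hdia_or : ∀ a b : B, dia (a ⊔ b) = dia a ⊔ dia b)
    (hdia_le : ∀ a : B, a ≤ dia a)
    (hdia_idem : ∀ a : B, dia (dia a) ≤ dia a)
    (hex0 : ex (⊥ : B) = ⊥)
    (hex_or : ∀ a b : B, ex (a ⊔ b) = ex a ⊔ ex b)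
    (hex_le : ∀ a : B, a ≤ ex a)
    (hex_idem : ∀ a : B, ex (ex a) ≤ ex a)
    (hms4 : ∀ a : B, ex (dia a) ≤ dia (ex a))
    (hS : ∀ a : B, dia (ex ((dia (ex aᶜ))ᶜ)) ≤ (dia (ex aᶜ))ᶜ) :
    dia (ex (⊥ : B)) = ⊥ ∧
    (∀ a b : B, dia (ex (a ⊔ b)) = dia (ex a) ⊔ dia (ex b)) ∧
    (∀ a : B, a ≤ dia (ex a)) ∧
    (∀ a : B, dia (ex (dia (ex a))) ≤ dia (ex a)) ∧
    (∀ a : B, dia (ex ((dia (ex aᶜ))ᶜ)) ≤ (dia (ex aᶜ))ᶜ) ∧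
    (∀ a : B, ex (dia (ex a)) = dia (ex a)) ∧
    (∀ a : B, dia (ex (ex a)) = dia (ex a)) := by
  have dia_mono : Monotone dia := Monotone.of_map_sup hdia_or
  exact ⟨by rw [hex0, hdia0], fun a b => by rw [hex_or, hdia_or],
    fun a => (hex_le a).trans (hdia_le _),
    map_map_map_map_le_of_map_comm_le dia_mono hdia_idem hex_idem hms4, hS,
    map_map_map_eq_of_map_comm_le dia_mono hex_idem hms4 hex_le,
    map_map_map_eq_map_map dia_mono hex_idem hex_le⟩

/-- In any MS4_S-algebra, `♦ = ◇∃` is an S5 possibility operator and the algebra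
`(B, ♦, ∃)` satisfies `∃♦a = ♦a = ♦∃a`. -/
theorem stmt9 {B : Type*} [BooleanAlgebra B] (dia ex : B → B)
    (hdia0 : dia (⊥ : B) = ⊥)
    (hdia_or : ∀ a b : B, dia (a ⊔ b) = dia a ⊔ dia b)
    (hdia_le : ∀ a : B, a ≤ dia a)
    (hdia_idem : ∀ a : B, dia (dia a) ≤ dia a)
    (hex0 : ex (⊥ : B) = ⊥)
    (hex_or : ∀ a b : B, ex (a ⊔ b) = ex a ⊔ ex b)
    (hex_le : ∀ a : B, a ≤ ex a)
    (hex_idem : ∀ a : B, ex (ex a) ≤ ex a)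
    (hex5 : ∀ a : B, ex ((ex aᶜ)ᶜ) ≤ (ex aᶜ)ᶜ)
    (hms4 : ∀ a : B, ex (dia a) ≤ dia (ex a))
    (hS : ∀ a : B, dia (ex ((dia (ex aᶜ))ᶜ)) ≤ (dia (ex aᶜ))ᶜ) :
    dia (ex (⊥ : B)) = ⊥ ∧
    (∀ a b : B, dia (ex (a ⊔ b)) = dia (ex a) ⊔ dia (ex b)) ∧
    (∀ a : B, a ≤ dia (ex a)) ∧
    (∀ a : B, dia (ex (dia (ex a))) ≤ dia (ex a)) ∧
    (∀ a : B, dia (ex ((dia (ex aᶜ))ᶜ)) ≤ (dia (ex aᶜ))ᶜ) ∧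
    (∀ a : B, ex (dia (ex a)) = dia (ex a)) ∧
    (∀ a : B, dia (ex (ex a)) = dia (ex a)) :=
  stmt9_general dia ex hdia0 hdia_or hdia_le hdia_idem hex0 hex_or hex_le hex_idem hms4 hS
end

section
/- Let (X, R) be a Kripke frame with R a quasi-order, and suppose X is rooted (some point sees every point). Then X validates the modal formula alt_k = □p₁ ∨ □(p₁→p₂) ∨ ... ∨ □(p₁∧...∧p_k → p_{k+1}) if and only if |X| ≤ k. -/
/-!
If `alt_k` fails at `x`, then for each `i ≤ k` some successor `yᵢ` of `x` lies in `p₁, …, pᵢ`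
but not in `pᵢ₊₁`; these `k + 1` points are pairwise distinct, since `yᵢ ∈ pⱼ₊₁ ∌ yⱼ` for
`j < i`. Conversely, `k + 1` distinct points `y₀, …, y_k` refute `alt_k` at a root under the
valuation making `pᵢ₊₁` true everywhere except at `yᵢ`.
-/

open Cardinal

section Alt

variable {X : Type*} (R : X → X → Prop)

/-- Truth of `alt_k` at `x`, the letter `pᵢ₊₁` being interpreted as `v i`. -/
def AltHolds (v : ℕ → Set X) (k : ℕ) (x : X) : Prop :=
  ∃ i ≤ k, ∀ y, R x y → (∀ j < i, y ∈ v j) → y ∈ v i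

theorem natCast_le_mk_iff_nonempty_embedding {n : ℕ} :
    (n : Cardinal) ≤ #X ↔ Nonempty (Fin n ↪ X) := by
  simpa using lift_mk_le' (α := Fin n) (β := X)

theorem Function.injective_of_mem_of_notMem {ι : Type*} [LinearOrder ι] {v : ι → Set X}
    {g : ι → X} (hmem : ∀ i j, j < i → g i ∈ v j) (hnotMem : ∀ i, g i ∉ v i) :
    Function.Injective g := by
  intro a b hab
  by_contra hne
  rcases lt_or_gt_of_ne hne with h | h
  · exact hnotMem a (hab ▸ hmem b a h)
  · exact hnotMem b (hab ▸ hmem a b h)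

theorem altHolds_of_mk_le {k : ℕ} (hX : #X ≤ k) (v : ℕ → Set X) (x : X) :
    AltHolds R v k x := by
  by_contra hfail
  simp only [AltHolds, not_exists, not_and, not_forall] at hfail
  choose g _ hmem hnotMem using fun i : Fin (k + 1) => hfail i (Nat.lt_succ_iff.mp i.isLt)
  have hinj : Function.Injective g :=
    Function.injective_of_mem_of_notMem (v := fun i : Fin (k + 1) => v i)
      (fun i j hji => hmem i j hji) hnotMem
  have hk : ((k + 1 : ℕ) : Cardinal) ≤ k :=
    (natCast_le_mk_iff_nonempty_embedding.mpr ⟨⟨g, hinj⟩⟩).trans hX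
  exact absurd (Nat.cast_le.mp hk) (Nat.not_succ_le_self k)

theorem exists_not_altHolds_of_forall_rel {r : X} (hroot : ∀ y, R r y) {k : ℕ}
    (f : Fin (k + 1) ↪ X) : ∃ v : ℕ → Set X, ¬ AltHolds R v k r := by
  refine ⟨fun j => (f '' {i | (i : ℕ) = j})ᶜ, ?_⟩
  simp only [AltHolds, not_exists, not_and, not_forall]
  intro i hik
  refine ⟨f ⟨i, Nat.lt_succ_of_le hik⟩, hroot _, ?_, ?_⟩
  · rintro j hji ⟨i', rfl, hi'⟩
    have := congrArg Fin.val (f.injective hi')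
    simp only at this
    omega
  · exact not_not.mpr ⟨⟨i, Nat.lt_succ_of_le hik⟩, rfl, rfl⟩

end Alt

theorem stmt13_general {X : Type*} (R : X → X → Prop)
    (r : X) (hroot : ∀ y : X, R r y) (k : ℕ) :
    (∀ (v : ℕ → Set X) (x : X), ∃ i ≤ k,
        ∀ y : X, R x y → (∀ j < i, y ∈ v j) → y ∈ v i) ↔
      Cardinal.mk X ≤ (k : Cardinal) := by
  refine ⟨fun hvalid => ?_, fun hX => altHolds_of_mk_le R hX⟩
  by_contra hlt
  have hk : ((k + 1 : ℕ) : Cardinal) ≤ #X := by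
    rw [Nat.cast_succ, ← Cardinal.succ_natCast]
    exact Order.succ_le_of_lt (not_le.mp hlt)
  obtain ⟨f⟩ := natCast_le_mk_iff_nonempty_embedding.mp hk
  obtain ⟨v, hv⟩ := exists_not_altHolds_of_forall_rel R hroot f
  exact hv (hvalid v r)

/-- A rooted quasi-ordered Kripke frame validates `alt_k` iff it has at most `k` points. -/
theorem stmt13 {X : Type*} (R : X → X → Prop)
    (hRrefl : Reflexive R) (hRtrans : Transitive R)
    (r : X) (hroot : ∀ y : X, R r y) (k : ℕ) :
    (∀ (v : ℕ → Set X) (x : X), ∃ i ≤ k,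
        ∀ y : X, R x y → (∀ j < i, y ∈ v j) → y ∈ v i) ↔
      Cardinal.mk X ≤ (k : Cardinal) :=
  stmt13_general R r hroot k
end

section
/- Let F = (X, E₁, E₂) be an S5₂-Kripke frame (two equivalence relations on a set X). Define T(F) = (X ⊔ L, R, E) where L = X/E₂, E is the smallest equivalence relation containing E₂ (on X) together with all pairs (x, [x]_{E₂}), and R = E₁ ∪ (X × L) ∪ (L × L). Then R is a quasi-order, E is an equivalence relation, and RE ⊆ ER. -/
/-- The equivalence relation `E` of the frame `T(F)` on `X ⊔ X/E₂`. -/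
def TE {X : Type*} (s : Setoid X) : X ⊕ Quotient s → X ⊕ Quotient s → Prop
  | Sum.inl x, Sum.inl y => s.r x y
  | Sum.inl x, Sum.inr α => Quotient.mk s x = α
  | Sum.inr α, Sum.inl y => Quotient.mk s y = α
  | Sum.inr α, Sum.inr β => α = β

/-- The quasi-order `R = E₁ ∪ (X × L) ∪ (L × L)` of the frame `T(F)` on `X ⊔ X/E₂`. -/
def TR {X : Type*} (E₁ : X → X → Prop) (s : Setoid X) :
    X ⊕ Quotient s → X ⊕ Quotient s → Prop
  | Sum.inl x, Sum.inl y => E₁ x y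
  | Sum.inl _, Sum.inr _ => True
  | Sum.inr _, Sum.inl _ => False
  | Sum.inr _, Sum.inr _ => True

/-!
`E` is the kernel of the map `X ⊔ L → L` sending a point to its `E₂`-class and fixing `L`,
which makes it an equivalence relation. Every element is `R`-below every class, so for
`RE ⊆ ER` the class of the target always serves as the witness.
-/

section

variable {X : Type*} (s : Setoid X)

def classOf : X ⊕ Quotient s → Quotient s
  | Sum.inl x => Quotient.mk s x
  | Sum.inr α => α

theorem TE_iff_classOf_eq {u v : X ⊕ Quotient s} : TE s u v ↔ classOf s u = classOf s v := by
  rcases u with x | α <;> rcases v with y | β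
  · exact Quotient.eq.symm
  · rfl
  · exact eq_comm
  · rfl

theorem equivalence_TE : Equivalence (TE s) := by
  have h : TE s = Function.onFun Eq (classOf s) := by
    ext u v
    exact TE_iff_classOf_eq s
  exact h ▸ eq_equivalence.comap (classOf s)

theorem TE_inr_classOf (w : X ⊕ Quotient s) : TE s (Sum.inr (classOf s w)) w :=
  (TE_iff_classOf_eq s).2 rfl

variable {E₁ : X → X → Prop}

theorem TR_inr (u : X ⊕ Quotient s) (α : Quotient s) : TR E₁ s u (Sum.inr α) := by
  cases u <;> trivial

theorem reflexive_TR (h : Reflexive E₁) : Reflexive (TR E₁ s) := by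
  rintro (x | α)
  · exact h x
  · trivial

theorem transitive_TR (h : Transitive E₁) : Transitive (TR E₁ s) := by
  rintro (x | α) (y | β) (z | γ) <;> simp only [TR, imp_self, implies_true, false_imp_iff]
  exact @h x y z

theorem exists_TR_TE (u w : X ⊕ Quotient s) : ∃ u', TR E₁ s u u' ∧ TE s u' w :=
  ⟨Sum.inr (classOf s w), TR_inr s u _, TE_inr_classOf s w⟩

end

/-- For an S5₂-frame `(X, E₁, E₂)`, in `T(F)` the relation `R` is a quasi-order,
`E` is an equivalence relation, and `RE ⊆ ER`. -/
theorem stmt14 {X : Type*} (E₁ : X → X → Prop) (hE₁ : Equivalence E₁) (s : Setoid X) :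
    Reflexive (TR E₁ s) ∧ Transitive (TR E₁ s) ∧ Equivalence (TE s) ∧
      (∀ u v w : X ⊕ Quotient s, TE s u v → TR E₁ s v w →
        ∃ u', TR E₁ s u u' ∧ TE s u' w) :=
  ⟨reflexive_TR s hE₁.refl, transitive_TR s fun _ _ _ => hE₁.trans,
    equivalence_TE s, fun u _ w _ _ => exists_TR_TE s u w⟩
end

section
/- Let F = (X, E₁, E₂) be an S5₂-Kripke frame and K an equivalence relation on X with E₁K ⊆ KE₁ and E₂K ⊆ KE₂. Define K̂ on X ⊔ L (where L = X/E₂) as K on X together with the induced relation K̄ on L (α K̄ β iff some x ∈ α is K-related to some y ∈ β). Then K̂ is an equivalence relation on X ⊔ L satisfying R K̂ ⊆ K̂ R and E K̂ ⊆ K̂ E, where R and E are the relations of the frame T(F). -/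
/-- The lift `K̂` of a correct partition `K` of `F` to `T(F)`: `K` on `X`, and the induced
relation `K̄` on the set of `E₂`-classes. -/
def Khat {X : Type*} (s : Setoid X) (K : X → X → Prop) :
    X ⊕ Quotient s → X ⊕ Quotient s → Prop
  | Sum.inl x, Sum.inl y => K x y
  | Sum.inr α, Sum.inr β => ∃ x y : X, Quotient.mk s x = α ∧ Quotient.mk s y = β ∧ K x y
  | _, _ => False

/-
`K̂` never relates a point of `X` to an `E₂`-class, so every clause splits into the blocks
`X × X` and `L × L`, and on `X × X` it is the hypothesis on `K`. The one real point is
transitivity of `K̄`: to chain `α K̄ β K̄ γ` through two different representatives of `β`, slide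
the first `K`-edge along `E₂` using `E₂K ⊆ KE₂`. The same sliding handles the `E`-step from a
class down to one of its points, and an `E`-step from `X` up to `L` is matched by the
`E₂`-class of the starting point.
-/

namespace Khat

variable {X : Type*} {s : Setoid X} {K : X → X → Prop}

theorem exists_mk_eq_and_rel_of_mk_eq
    (hKE₂ : ∀ x y y' : X, K x y → s.r y y' → ∃ x', s.r x x' ∧ K x' y')
    {x y y' : X} (hxy : K x y) (hy : Quotient.mk s y = Quotient.mk s y') :
    ∃ x', Quotient.mk s x' = Quotient.mk s x ∧ K x' y' := by
  obtain ⟨x', hxx', hx'y'⟩ := hKE₂ x y y' hxy (Quotient.exact hy)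
  exact ⟨x', (Quotient.sound hxx').symm, hx'y'⟩

theorem refl (hK : ∀ x, K x x) : ∀ u, Khat s K u u
  | .inl x => hK x
  | .inr α => α.inductionOn fun x => ⟨x, x, rfl, rfl, hK x⟩

theorem symm (hK : ∀ {x y}, K x y → K y x) : ∀ {u v}, Khat s K u v → Khat s K v u
  | .inl _, .inl _, h => hK h
  | .inr _, .inr _, ⟨x, y, hx, hy, hxy⟩ => ⟨y, x, hy, hx, hK hxy⟩

theorem trans (hK : ∀ {x y z}, K x y → K y z → K x z)
    (hKE₂ : ∀ x y y' : X, K x y → s.r y y' → ∃ x', s.r x x' ∧ K x' y') :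
    ∀ {u v w}, Khat s K u v → Khat s K v w → Khat s K u w
  | .inl _, .inl _, .inl _, h₁, h₂ => hK h₁ h₂
  | .inr _, .inr _, .inr _, ⟨_, _, rfl, rfl, hxy⟩, ⟨_, z, hy, rfl, hyz⟩ =>
    let ⟨x', hx', hx'y⟩ := exists_mk_eq_and_rel_of_mk_eq hKE₂ hxy hy.symm
    ⟨x', z, hx', rfl, hK hx'y hyz⟩

theorem equivalence (hK : Equivalence K)
    (hKE₂ : ∀ x y y' : X, K x y → s.r y y' → ∃ x', s.r x x' ∧ K x' y') :
    Equivalence (Khat s K) :=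
  ⟨refl hK.refl, symm hK.symm, trans (K := K) hK.trans hKE₂⟩

theorem exists_TR_Khat_of_Khat_of_TR {E₁ : X → X → Prop} (hK : ∀ x, K x x)
    (hKE₁ : ∀ x y y' : X, K x y → E₁ y y' → ∃ x', E₁ x x' ∧ K x' y') :
    ∀ u v w, Khat s K u v → TR E₁ s v w → ∃ u', TR E₁ s u u' ∧ Khat s K u' w
  | .inl x, .inl y, .inl z, h₁, h₂ =>
    let ⟨x', hxx', hx'z⟩ := hKE₁ x y z h₁ h₂
    ⟨.inl x', hxx', hx'z⟩
  | .inl _, .inl _, .inr γ, _, _ | .inr _, .inr _, .inr γ, _, _ =>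
    ⟨.inr γ, trivial, refl hK (.inr γ)⟩

theorem exists_TE_Khat_of_Khat_of_TE
    (hKE₂ : ∀ x y y' : X, K x y → s.r y y' → ∃ x', s.r x x' ∧ K x' y') :
    ∀ u v w, Khat s K u v → TE s v w → ∃ u', TE s u u' ∧ Khat s K u' w
  | .inl x, .inl y, .inl z, h₁, h₂ =>
    let ⟨x', hxx', hx'z⟩ := hKE₂ x y z h₁ h₂
    ⟨.inl x', hxx', hx'z⟩
  | .inl x, .inl y, .inr _, h₁, h₂ => ⟨.inr (Quotient.mk s x), rfl, x, y, rfl, h₂, h₁⟩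
  | .inr _, .inr _, .inl _, ⟨_, _, rfl, rfl, hxy⟩, h₂ =>
    let ⟨x', hx', hx'z⟩ := exists_mk_eq_and_rel_of_mk_eq hKE₂ hxy h₂.symm
    ⟨.inl x', hx', hx'z⟩
  | .inr α, .inr _, .inr _, h₁, rfl => ⟨.inr α, rfl, h₁⟩

end Khat

theorem stmt17_general {X : Type*} (E₁ K : X → X → Prop)
    (s : Setoid X) (hK : Equivalence K)
    (hKE₁ : ∀ x y y' : X, K x y → E₁ y y' → ∃ x', E₁ x x' ∧ K x' y')
    (hKE₂ : ∀ x y y' : X, K x y → s.r y y' → ∃ x', s.r x x' ∧ K x' y') :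
    Equivalence (Khat s K) ∧
    (∀ u v w : X ⊕ Quotient s, Khat s K u v → TR E₁ s v w →
      ∃ u', TR E₁ s u u' ∧ Khat s K u' w) ∧
    (∀ u v w : X ⊕ Quotient s, Khat s K u v → TE s v w →
      ∃ u', TE s u u' ∧ Khat s K u' w) :=
  ⟨Khat.equivalence hK hKE₂, Khat.exists_TR_Khat_of_Khat_of_TR hK.refl hKE₁,
    Khat.exists_TE_Khat_of_Khat_of_TE hKE₂⟩

/-- If `K` is an equivalence relation on `X` with `E₁K ⊆ KE₁` and `E₂K ⊆ KE₂`, then `K̂`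
is an equivalence relation on `X ⊔ L` with `R K̂ ⊆ K̂ R` and `E K̂ ⊆ K̂ E`. -/
theorem stmt17 {X : Type*} (E₁ K : X → X → Prop)
    (hE₁ : Equivalence E₁) (s : Setoid X) (hK : Equivalence K)
    (hKE₁ : ∀ x y y' : X, K x y → E₁ y y' → ∃ x', E₁ x x' ∧ K x' y')
    (hKE₂ : ∀ x y y' : X, K x y → s.r y y' → ∃ x', s.r x x' ∧ K x' y') :
    Equivalence (Khat s K) ∧
    (∀ u v w : X ⊕ Quotient s, Khat s K u v → TR E₁ s v w →
      ∃ u', TR E₁ s u u' ∧ Khat s K u' w) ∧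
    (∀ u v w : X ⊕ Quotient s, Khat s K u v → TE s v w →
      ∃ u', TE s u u' ∧ Khat s K u' w) :=
  stmt17_general E₁ K s hK hKE₁ hKE₂
end

section
/- In a Boolean algebra with an S4 operator ◇ and an S5 operator ∃ satisfying ∃◇a ≤ ◇∃a, the set H_■ of fixpoints of ■ = □∀ is a bounded sublattice of B closed under the Heyting implication a → b := ■(¬a ∨ b); in particular, for a, b, c ∈ H_■, a ∧ b ≤ c iff a ≤ ■(¬b ∨ c). -/
section Deflationary

variable {α : Type*} {k : α → α}

theorem le_apply_iff_of_apply_eq [Preorder α] (hmono : Monotone k) (hle : ∀ x, k x ≤ x)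
    {a x : α} (ha : k a = a) : a ≤ k x ↔ a ≤ x :=
  ⟨fun h => h.trans (hle x), fun h => ha ▸ hmono h⟩

theorem apply_sup_eq_of_apply_eq [SemilatticeSup α] (hmono : Monotone k) (hle : ∀ x, k x ≤ x)
    {a b : α} (ha : k a = a) (hb : k b = b) : k (a ⊔ b) = a ⊔ b :=
  le_antisymm (hle _) <| sup_le ((le_apply_iff_of_apply_eq hmono hle ha).2 le_sup_left)
    ((le_apply_iff_of_apply_eq hmono hle hb).2 le_sup_right)

theorem comp_idem_of_le_comm [PartialOrder α] {i j : α → α} (hi_mono : Monotone i)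
    (hi_le : ∀ x, i x ≤ x) (hj_le : ∀ x, j x ≤ x) (hi_idem : ∀ x, i (i x) = i x)
    (hj_idem : ∀ x, j (j x) = j x) (hcomm : ∀ x, i (j x) ≤ j (i x)) (a : α) :
    i (j (i (j a))) = i (j a) := by
  refine le_antisymm ((hi_le _).trans (hj_le _)) ?_
  have h : i (j a) ≤ j (i (j a)) := by simpa only [hj_idem] using hcomm (j a)
  calc i (j a) = i (i (j a)) := (hi_idem _).symm
    _ ≤ i (j (i (j a))) := hi_mono h

end Deflationary

namespace boxOf

variable {B : Type*} [BooleanAlgebra B] {f g : B → B}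

theorem monotone (hf_sup : ∀ a b, f (a ⊔ b) = f a ⊔ f b) : Monotone (boxOf f) :=
  fun _ _ h => compl_le_compl (OrderHomClass.mono (SupHom.mk f hf_sup) (compl_le_compl h))

theorem apply_le (hf_le : ∀ a, a ≤ f a) (a : B) : boxOf f a ≤ a :=
  compl_le_iff_compl_le.1 (hf_le aᶜ)

theorem boxOf_boxOf (hf_le : ∀ a, a ≤ f a) (hf_idem : ∀ a, f (f a) ≤ f a) (a : B) :
    boxOf f (boxOf f a) = boxOf f a := by
  refine le_antisymm (apply_le hf_le _) ?_
  simpa only [boxOf, compl_compl] using compl_le_compl (hf_idem aᶜ)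

theorem map_inf (hf_sup : ∀ a b, f (a ⊔ b) = f a ⊔ f b) (a b : B) :
    boxOf f (a ⊓ b) = boxOf f a ⊓ boxOf f b := by
  simp only [boxOf, compl_inf, hf_sup, compl_sup]

theorem map_top (hf_bot : f ⊥ = ⊥) : boxOf f (⊤ : B) = ⊤ := by
  simp only [boxOf, compl_top, hf_bot, compl_bot]

theorem le_comm_of_le_comm (hcomm : ∀ a, g (f a) ≤ f (g a)) (a : B) :
    boxOf f (boxOf g a) ≤ boxOf g (boxOf f a) := by
  simpa only [boxOf, compl_compl, compl_le_compl_iff_le] using hcomm aᶜ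

end boxOf

theorem stmt18_general {B : Type*} [BooleanAlgebra B] (dia ex : B → B)
    (hdia0 : dia (⊥ : B) = ⊥)
    (hdia_or : ∀ a b : B, dia (a ⊔ b) = dia a ⊔ dia b)
    (hdia_le : ∀ a : B, a ≤ dia a)
    (hdia_idem : ∀ a : B, dia (dia a) ≤ dia a)
    (hex0 : ex (⊥ : B) = ⊥)
    (hex_or : ∀ a b : B, ex (a ⊔ b) = ex a ⊔ ex b)
    (hex_le : ∀ a : B, a ≤ ex a)
    (hex_idem : ∀ a : B, ex (ex a) ≤ ex a)
    (hms4 : ∀ a : B, ex (dia a) ≤ dia (ex a)) :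
    boxOf dia (boxOf ex (⊥ : B)) = ⊥ ∧
    boxOf dia (boxOf ex (⊤ : B)) = ⊤ ∧
    (∀ a b : B, boxOf dia (boxOf ex a) = a → boxOf dia (boxOf ex b) = b →
      boxOf dia (boxOf ex (a ⊓ b)) = a ⊓ b) ∧
    (∀ a b : B, boxOf dia (boxOf ex a) = a → boxOf dia (boxOf ex b) = b →
      boxOf dia (boxOf ex (a ⊔ b)) = a ⊔ b) ∧
    (∀ a b : B, boxOf dia (boxOf ex a) = a → boxOf dia (boxOf ex b) = b →
      boxOf dia (boxOf ex (boxOf dia (boxOf ex (aᶜ ⊔ b)))) =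
        boxOf dia (boxOf ex (aᶜ ⊔ b))) ∧
    (∀ a b c : B, boxOf dia (boxOf ex a) = a → boxOf dia (boxOf ex b) = b →
      boxOf dia (boxOf ex c) = c →
      (a ⊓ b ≤ c ↔ a ≤ boxOf dia (boxOf ex (bᶜ ⊔ c)))) := by
  have hmono : Monotone fun x => boxOf dia (boxOf ex x) :=
    (boxOf.monotone hdia_or).comp (boxOf.monotone hex_or)
  have hle : ∀ x, boxOf dia (boxOf ex x) ≤ x :=
    fun x => (boxOf.apply_le hdia_le _).trans (boxOf.apply_le hex_le x)
  refine ⟨le_bot_iff.1 (hle ⊥), by rw [boxOf.map_top hex0, boxOf.map_top hdia0],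
    ?_, ?_, ?_, ?_⟩
  · intro a b ha hb
    rw [boxOf.map_inf hex_or, boxOf.map_inf hdia_or, ha, hb]
  · exact fun a b => apply_sup_eq_of_apply_eq hmono hle
  · exact fun a b _ _ => comp_idem_of_le_comm (boxOf.monotone hdia_or)
      (boxOf.apply_le hdia_le) (boxOf.apply_le hex_le) (boxOf.boxOf_boxOf hdia_le hdia_idem)
      (boxOf.boxOf_boxOf hex_le hex_idem) (boxOf.le_comm_of_le_comm hms4) _
  · intro a b c ha _ _
    rw [le_apply_iff_of_apply_eq hmono hle ha, sup_comm, ← himp_eq, le_himp_iff]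

/-- In an MS4-algebra, the set of `■`-fixpoints (`■ = □∀`) is a bounded sublattice closed
under the Heyting implication `a → b := ■(¬a ∨ b)`, and residuation holds on it. -/
theorem stmt18 {B : Type*} [BooleanAlgebra B] (dia ex : B → B)
    (hdia0 : dia (⊥ : B) = ⊥)
    (hdia_or : ∀ a b : B, dia (a ⊔ b) = dia a ⊔ dia b)
    (hdia_le : ∀ a : B, a ≤ dia a)
    (hdia_idem : ∀ a : B, dia (dia a) ≤ dia a)
    (hex0 : ex (⊥ : B) = ⊥)
    (hex_or : ∀ a b : B, ex (a ⊔ b) = ex a ⊔ ex b)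
    (hex_le : ∀ a : B, a ≤ ex a)
    (hex_idem : ∀ a : B, ex (ex a) ≤ ex a)
    (hex5 : ∀ a : B, ex ((ex aᶜ)ᶜ) ≤ (ex aᶜ)ᶜ)
    (hms4 : ∀ a : B, ex (dia a) ≤ dia (ex a)) :
    boxOf dia (boxOf ex (⊥ : B)) = ⊥ ∧
    boxOf dia (boxOf ex (⊤ : B)) = ⊤ ∧
    (∀ a b : B, boxOf dia (boxOf ex a) = a → boxOf dia (boxOf ex b) = b →
      boxOf dia (boxOf ex (a ⊓ b)) = a ⊓ b) ∧
    (∀ a b : B, boxOf dia (boxOf ex a) = a → boxOf dia (boxOf ex b) = b →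
      boxOf dia (boxOf ex (a ⊔ b)) = a ⊔ b) ∧
    (∀ a b : B, boxOf dia (boxOf ex a) = a → boxOf dia (boxOf ex b) = b →
      boxOf dia (boxOf ex (boxOf dia (boxOf ex (aᶜ ⊔ b)))) =
        boxOf dia (boxOf ex (aᶜ ⊔ b))) ∧
    (∀ a b c : B, boxOf dia (boxOf ex a) = a → boxOf dia (boxOf ex b) = b →
      boxOf dia (boxOf ex c) = c →
      (a ⊓ b ≤ c ↔ a ≤ boxOf dia (boxOf ex (bᶜ ⊔ c)))) :=
  stmt18_general dia ex hdia0 hdia_or hdia_le hdia_idem hex0 hex_or hex_le hex_idem hms4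
end
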